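/- Let K be a field, x = (x_1,…,x_n) variables, and f = (f_1,…,f_n) polynomials in K[x]. For every e ≥ 0 there exists d_0 ≥ 0 such that for all d ≥ d_0 the equality of K-subspaces (f)^{≤d}_x ∩ K[x^{≤e}] = (f)_x ∩ K[x^{≤e}] holds, where (f)_x is the ideal generated by f_1,…,f_n. -/

import Mathlib

/-!
The spaces `(f)^{≤d}_x` increase with `d` and exhaust the ideal `(f)_x`, since a
combination `∑ cᵢ fᵢ` lies in `(f)^{≤D}_x` for `D = maxᵢ (deg fᵢ + deg cᵢ)`. Their traces on the
finite-dimensional space `K[x^{≤e}]` form an increasing chain, which must become stationary.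
-/

/-- `(f)^{≤d}_x` : the `K`-subspace of `K[x]` spanned by the products `f i * g` with
`totalDegree (f i) + totalDegree g ≤ d`. -/
noncomputable def boundedIdealSpan {K : Type*} [Field K] {n s : ℕ}
    (f : Fin s → MvPolynomial (Fin n) K) (d : ℕ) : Submodule K (MvPolynomial (Fin n) K) :=
  Submodule.span K
    {p | ∃ (i : Fin s) (g : MvPolynomial (Fin n) K),
      (f i).totalDegree + g.totalDegree ≤ d ∧ p = f i * g}

theorem Submodule.eventually_inf_eq_iSup_inf {R M : Type*} [Ring R] [AddCommGroup M]
    [Module R M] (V : Submodule R M) [IsNoetherian R V] (N : ℕ → Submodule R M)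
    (hN : Monotone N) : ∃ d₀, ∀ d ≥ d₀, N d ⊓ V = (⨆ k, N k) ⊓ V := by
  let T : ℕ →o Submodule R V := ⟨fun d => (N d).comap V.subtype, fun _ _ h => comap_mono (hN h)⟩
  obtain ⟨d₀, hd₀⟩ := monotone_stabilizes_iff_noetherian.mpr ‹IsNoetherian R V› T
  refine ⟨d₀, fun d hd => le_antisymm (inf_le_inf_right _ (le_iSup N d)) ?_⟩
  rintro x ⟨hxN, hxV⟩
  obtain ⟨D, hxD⟩ := (mem_iSup_of_directed N hN.directed_le).mp hxN
  have hx : (⟨x, hxV⟩ : V) ∈ T (max D d) := hN (le_max_left D d) hxD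
  rw [← hd₀ _ (hd.trans (le_max_right D d)), hd₀ d hd] at hx
  exact ⟨hx, hxV⟩

section boundedIdealSpan

variable {K : Type*} [Field K] {n s : ℕ} (f : Fin s → MvPolynomial (Fin n) K)

theorem boundedIdealSpan_mono : Monotone (boundedIdealSpan f) := fun _ _ h =>
  Submodule.span_mono fun _ ⟨i, g, hle, hp⟩ => ⟨i, g, hle.trans h, hp⟩

theorem boundedIdealSpan_le_ideal (d : ℕ) :
    boundedIdealSpan f d ≤ (Ideal.span (Set.range f)).restrictScalars K := by
  rw [boundedIdealSpan, Submodule.span_le]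
  rintro p ⟨i, g, -, rfl⟩
  exact Ideal.mul_mem_right g _ (Ideal.subset_span (Set.mem_range_self i))

theorem exists_mem_boundedIdealSpan {p : MvPolynomial (Fin n) K}
    (hp : p ∈ Ideal.span (Set.range f)) : ∃ D, p ∈ boundedIdealSpan f D := by
  rw [Ideal.span, Submodule.mem_span_range_iff_exists_fun] at hp
  obtain ⟨c, rfl⟩ := hp
  let D := Finset.univ.sup fun i => (f i).totalDegree + (c i).totalDegree
  refine ⟨D, Submodule.sum_mem _ fun i _ => Submodule.subset_span ?_⟩
  exact ⟨i, c i, Finset.le_sup (f := fun i => (f i).totalDegree + (c i).totalDegree)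
    (Finset.mem_univ i), mul_comm _ _⟩

theorem iSup_boundedIdealSpan :
    ⨆ d, boundedIdealSpan f d = (Ideal.span (Set.range f)).restrictScalars K := by
  refine le_antisymm (iSup_le (boundedIdealSpan_le_ideal f)) fun p hp => ?_
  obtain ⟨D, hD⟩ := exists_mem_boundedIdealSpan f hp
  exact Submodule.mem_iSup_of_mem D hD

end boundedIdealSpan

/-- For every `e ≥ 0` there exists `d₀` such that for all `d ≥ d₀`,
`(f)^{≤d}_x ∩ K[x^{≤e}] = (f)_x ∩ K[x^{≤e}]` as `K`-subspaces of `K[x]`. -/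
theorem boundedIdealSpan_inter_stabilizes
    (K : Type*) [Field K] (n : ℕ) (f : Fin n → MvPolynomial (Fin n) K) (e : ℕ) :
    ∃ d₀ : ℕ, ∀ d ≥ d₀,
      boundedIdealSpan f d ⊓ MvPolynomial.restrictTotalDegree (Fin n) K e =
        (Ideal.span (Set.range f)).restrictScalars K ⊓
          MvPolynomial.restrictTotalDegree (Fin n) K e := by
  rw [← iSup_boundedIdealSpan]
  exact (MvPolynomial.restrictTotalDegree (Fin n) K e).eventually_inf_eq_iSup_inf _
    (boundedIdealSpan_mono f)
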